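/- Under the code-function setup (F^n with no feedback from (Y,Z) to F; X_i determined by (F^i, Z^{i-1}); feedback Markov chain F^i − (Y^i, Z^{i-1}) − Z_i; channel Markov chain F^i − (Y^{i-1}, X^i, Z^{i-1}) − Y_i), the mutual information satisfies I(F^n; Y^n) = I(X^n → Y^n ‖ Z^n) − I(F^n; Z^n | Y^n), where I(X^n → Y^n ‖ Z^n) = ∑_{i=1}^n I(X^i; Y_i | Y^{i-1}, Z^{i-1}). -/
import Mathlib


open Finset

namespace NFB

variable {Ω : Type*} [Fintype Ω]

/-- Probability that the finite random variable `X` (on finite sample space `Ω`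
with weights `μ`) takes the value `a`. -/
noncomputable def pr (μ : Ω → ℝ) {α : Type*} [Fintype α] [DecidableEq α]
    (X : Ω → α) (a : α) : ℝ :=
  ∑ ω ∈ Finset.univ.filter (fun ω => X ω = a), μ ω

/-- Conditional probability `p(X = a | Y = b)`. -/
noncomputable def condpr (μ : Ω → ℝ) {α β : Type*} [Fintype α] [DecidableEq α]
    [Fintype β] [DecidableEq β] (X : Ω → α) (Y : Ω → β) (a : α) (b : β) : ℝ :=
  pr μ (fun ω => (X ω, Y ω)) (a, b) / pr μ Y b

/-- Shannon entropy (base 2) of a finite random variable. -/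
noncomputable def ent (μ : Ω → ℝ) {α : Type*} [Fintype α] [DecidableEq α]
    (X : Ω → α) : ℝ :=
  ∑ a : α, -(pr μ X a * Real.logb 2 (pr μ X a))

/-- Shannon entropy (base 2) of a distribution given directly as a weight function. -/
noncomputable def entD {γ : Type*} [Fintype γ] (p : γ → ℝ) : ℝ :=
  ∑ c : γ, -(p c * Real.logb 2 (p c))

/-- Binary entropy function (base 2). -/
noncomputable def binent (a : ℝ) : ℝ :=
  -(a * Real.logb 2 a) - ((1 - a) * Real.logb 2 (1 - a))

/-- Conditional entropy `H(X | Y)`. -/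
noncomputable def condent (μ : Ω → ℝ) {α β : Type*} [Fintype α] [DecidableEq α]
    [Fintype β] [DecidableEq β] (X : Ω → α) (Y : Ω → β) : ℝ :=
  ent μ (fun ω => (X ω, Y ω)) - ent μ Y

/-- Mutual information `I(X; Y)`. -/
noncomputable def mi (μ : Ω → ℝ) {α β : Type*} [Fintype α] [DecidableEq α]
    [Fintype β] [DecidableEq β] (X : Ω → α) (Y : Ω → β) : ℝ :=
  ent μ X + ent μ Y - ent μ (fun ω => (X ω, Y ω))

/-- Conditional mutual information `I(X; Y | Z)`. -/
noncomputable def cmi (μ : Ω → ℝ) {α β γ : Type*} [Fintype α] [DecidableEq α]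
    [Fintype β] [DecidableEq β] [Fintype γ] [DecidableEq γ]
    (X : Ω → α) (Y : Ω → β) (Z : Ω → γ) : ℝ :=
  condent μ X Z + condent μ Y Z - condent μ (fun ω => (X ω, Y ω)) Z

/-- The length-`i` prefix of a sequence `x : Fin n → α`. -/
def pfx {α : Type*} {n : ℕ} (x : Fin n → α) (i : ℕ) (h : i ≤ n) : Fin i → α :=
  fun j => x (Fin.castLE h j)

/-- Directed information `I(Xⁿ → Yⁿ) = ∑ᵢ I(Xⁱ; Yᵢ | Yⁱ⁻¹)`. -/
noncomputable def dirinfo (μ : Ω → ℝ) {α β : Type*} [Fintype α] [DecidableEq α]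
    [Fintype β] [DecidableEq β] {n : ℕ} (X : Ω → Fin n → α) (Y : Ω → Fin n → β) : ℝ :=
  ∑ i : Fin n, cmi μ (fun ω => pfx (X ω) (i.1 + 1) i.isLt)
    (fun ω => Y ω i) (fun ω => pfx (Y ω) i.1 i.isLt.le)

/-- Conditional directed information `I(Xⁿ → Yⁿ | W) = ∑ᵢ I(Xⁱ; Yᵢ | Yⁱ⁻¹, W)`. -/
noncomputable def dirinfoCond (μ : Ω → ℝ) {α β γ : Type*} [Fintype α] [DecidableEq α]
    [Fintype β] [DecidableEq β] [Fintype γ] [DecidableEq γ]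
    {n : ℕ} (X : Ω → Fin n → α) (Y : Ω → Fin n → β) (W : Ω → γ) : ℝ :=
  ∑ i : Fin n, cmi μ (fun ω => pfx (X ω) (i.1 + 1) i.isLt)
    (fun ω => Y ω i) (fun ω => (pfx (Y ω) i.1 i.isLt.le, W ω))

/-- Causal conditional directed information
`I(Xⁿ → Yⁿ ‖ Zⁿ) = ∑ᵢ I(Xⁱ; Yᵢ | Yⁱ⁻¹, Zⁱ⁻¹)`. -/
noncomputable def dirinfoCausal (μ : Ω → ℝ) {α β γ : Type*} [Fintype α] [DecidableEq α]
    [Fintype β] [DecidableEq β] [Fintype γ] [DecidableEq γ]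
    {n : ℕ} (X : Ω → Fin n → α) (Y : Ω → Fin n → β) (Z : Ω → Fin n → γ) : ℝ :=
  ∑ i : Fin n, cmi μ (fun ω => pfx (X ω) (i.1 + 1) i.isLt)
    (fun ω => Y ω i) (fun ω => (pfx (Y ω) i.1 i.isLt.le, pfx (Z ω) i.1 i.isLt.le))

/-- Directed information from feedback to outputs
`I(Zⁿ⁻¹ → Yⁿ) = ∑ᵢ I(Zⁱ⁻¹; Yᵢ | Yⁱ⁻¹)`. -/
noncomputable def fbinfo (μ : Ω → ℝ) {ζ β : Type*} [Fintype ζ] [DecidableEq ζ]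
    [Fintype β] [DecidableEq β] {n : ℕ} (Z : Ω → Fin n → ζ) (Y : Ω → Fin n → β) : ℝ :=
  ∑ i : Fin n, cmi μ (fun ω => pfx (Z ω) i.1 i.isLt.le)
    (fun ω => Y ω i) (fun ω => pfx (Y ω) i.1 i.isLt.le)


section AuxEntropy

variable {α β : Type*} [Fintype α] [DecidableEq α] [Fintype β] [DecidableEq β]

lemma pr_pair_fn_right (μ : Ω → ℝ) (X : Ω → α) (f : α → β) (a : α) (b : β) :
    pr μ (fun ω => (X ω, f (X ω))) (a, b) = if f a = b then pr μ X a else 0 := by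
  unfold pr
  split
  · next h =>
    subst h
    apply Finset.sum_congr _ (fun _ _ => rfl)
    ext ω
    simp only [Finset.mem_filter, Finset.mem_univ, true_and, Prod.mk.injEq]
    exact ⟨fun h => h.1, fun h => ⟨h, by rw [h]⟩⟩
  · next h =>
    rw [Finset.filter_false_of_mem, Finset.sum_empty]
    intro ω _ hc
    rw [Prod.mk.injEq] at hc
    exact h (hc.1 ▸ hc.2)

lemma pr_pair_fn_left (μ : Ω → ℝ) (X : Ω → α) (f : α → β) (a : α) (b : β) :
    pr μ (fun ω => (f (X ω), X ω)) (b, a) = if f a = b then pr μ X a else 0 := by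
  unfold pr
  split
  · next h =>
    subst h
    apply Finset.sum_congr _ (fun _ _ => rfl)
    ext ω
    simp only [Finset.mem_filter, Finset.mem_univ, true_and, Prod.mk.injEq]
    exact ⟨fun h => h.2, fun h => ⟨by rw [h], h⟩⟩
  · next h =>
    rw [Finset.filter_false_of_mem, Finset.sum_empty]
    intro ω _ hc
    rw [Prod.mk.injEq] at hc
    exact h (hc.2 ▸ hc.1)

lemma ent_pair_fn_right (μ : Ω → ℝ) (X : Ω → α) (f : α → β) :
    ent μ (fun ω => (X ω, f (X ω))) = ent μ X := by
  unfold ent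
  rw [Fintype.sum_prod_type]
  refine Finset.sum_congr rfl fun a _ => ?_
  have h : ∀ b, -(pr μ (fun ω => (X ω, f (X ω))) (a, b) *
      Real.logb 2 (pr μ (fun ω => (X ω, f (X ω))) (a, b)))
      = if f a = b then -(pr μ X a * Real.logb 2 (pr μ X a)) else 0 := by
    intro b
    rw [pr_pair_fn_right]
    split <;> simp
  simp only [h]
  rw [Finset.sum_ite_eq Finset.univ (f a)
    (fun _ => -(pr μ X a * Real.logb 2 (pr μ X a)))]
  simp

lemma ent_pair_fn_left (μ : Ω → ℝ) (X : Ω → α) (f : α → β) :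
    ent μ (fun ω => (f (X ω), X ω)) = ent μ X := by
  unfold ent
  rw [Fintype.sum_prod_type_right]
  refine Finset.sum_congr rfl fun a _ => ?_
  have h : ∀ b, -(pr μ (fun ω => (f (X ω), X ω)) (b, a) *
      Real.logb 2 (pr μ (fun ω => (f (X ω), X ω)) (b, a)))
      = if f a = b then -(pr μ X a * Real.logb 2 (pr μ X a)) else 0 := by
    intro b
    rw [pr_pair_fn_left]
    split <;> simp
  simp only [h]
  rw [Finset.sum_ite_eq Finset.univ (f a)
    (fun _ => -(pr μ X a * Real.logb 2 (pr μ X a)))]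
  simp

/-- Entropy is invariant under mutual determination. -/
lemma ent_eq_of_maps (μ : Ω → ℝ) (X : Ω → α) (Y : Ω → β) (f : α → β) (g : β → α)
    (hf : ∀ ω, Y ω = f (X ω)) (hg : ∀ ω, X ω = g (Y ω)) : ent μ X = ent μ Y := by
  have h1 : ent μ (fun ω => (X ω, Y ω)) = ent μ X := by
    have e : (fun ω => (X ω, Y ω)) = fun ω => (X ω, f (X ω)) :=
      funext fun ω => by rw [hf ω]
    rw [e, ent_pair_fn_right]
  have h2 : ent μ (fun ω => (X ω, Y ω)) = ent μ Y := by
    have e : (fun ω => (X ω, Y ω)) = fun ω => (g (Y ω), Y ω) :=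
      funext fun ω => by rw [hg ω]
    rw [e, ent_pair_fn_left]
  rw [← h1, h2]

end AuxEntropy

section AuxInfo

variable {α β γ δ δ' ε χ : Type*} [Fintype α] [DecidableEq α] [Fintype β] [DecidableEq β]
  [Fintype γ] [DecidableEq γ] [Fintype δ] [DecidableEq δ] [Fintype δ'] [DecidableEq δ']
  [Fintype ε] [DecidableEq ε] [Fintype χ] [DecidableEq χ]

lemma condent_congr (μ : Ω → ℝ) (B : Ω → α) (C : Ω → β) (C' : Ω → γ)
    (f : β → γ) (g : γ → β) (hf : ∀ ω, C' ω = f (C ω)) (hg : ∀ ω, C ω = g (C' ω)) :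
    condent μ B C = condent μ B C' := by
  unfold condent
  rw [ent_eq_of_maps μ C C' f g hf hg,
      ent_eq_of_maps μ (fun ω => (B ω, C ω)) (fun ω => (B ω, C' ω))
        (fun p => (p.1, f p.2)) (fun p => (p.1, g p.2))
        (fun ω => by simp only [hf ω]) (fun ω => by simp only [hg ω])]

lemma cmi_pair_right (μ : Ω → ℝ) (A : Ω → α) (B : Ω → β) (C : Ω → γ) (D : Ω → δ) :
    cmi μ A (fun ω => (B ω, C ω)) D
      = cmi μ A B D + cmi μ A C (fun ω => (B ω, D ω)) := by
  simp only [cmi, condent]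
  have h1 : ent μ (fun ω => ((B ω, C ω), D ω)) = ent μ (fun ω => (C ω, (B ω, D ω))) :=
    ent_eq_of_maps μ _ _ (fun p => (p.1.2, (p.1.1, p.2))) (fun p => ((p.2.1, p.1), p.2.2))
      (fun ω => rfl) (fun ω => rfl)
  have h2 : ent μ (fun ω => ((A ω, (B ω, C ω)), D ω))
      = ent μ (fun ω => ((A ω, C ω), (B ω, D ω))) :=
    ent_eq_of_maps μ _ _ (fun p => ((p.1.1, p.1.2.2), (p.1.2.1, p.2)))
      (fun p => ((p.1.1, (p.2.1, p.1.2)), p.2.2)) (fun ω => rfl) (fun ω => rfl)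
  have h3 : ent μ (fun ω => ((A ω, B ω), D ω)) = ent μ (fun ω => (A ω, (B ω, D ω))) :=
    ent_eq_of_maps μ _ _ (fun p => (p.1.1, (p.1.2, p.2))) (fun p => ((p.1, p.2.1), p.2.2))
      (fun ω => rfl) (fun ω => rfl)
  linarith [h1, h2, h3]

lemma cmi_comm (μ : Ω → ℝ) (A : Ω → α) (B : Ω → β) (C : Ω → γ) :
    cmi μ A B C = cmi μ B A C := by
  simp only [cmi, condent]
  have h : ent μ (fun ω => ((A ω, B ω), C ω)) = ent μ (fun ω => ((B ω, A ω), C ω)) :=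
    ent_eq_of_maps μ _ _ (fun p => ((p.1.2, p.1.1), p.2)) (fun p => ((p.1.2, p.1.1), p.2))
      (fun ω => rfl) (fun ω => rfl)
  linarith [h]

lemma cmi_eq_condent_sub (μ : Ω → ℝ) (A : Ω → α) (B : Ω → β) (C : Ω → γ) :
    cmi μ A B C = condent μ B C - condent μ B (fun ω => (A ω, C ω)) := by
  simp only [cmi, condent]
  have h : ent μ (fun ω => ((A ω, B ω), C ω)) = ent μ (fun ω => (B ω, (A ω, C ω))) :=
    ent_eq_of_maps μ _ _ (fun p => (p.1.2, (p.1.1, p.2))) (fun p => ((p.2.1, p.1), p.2.2))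
      (fun ω => rfl) (fun ω => rfl)
  linarith [h]

lemma cmi_add_fn' (μ : Ω → ℝ) (A : Ω → α) (B : Ω → β) (C : Ω → γ) (Xd : Ω → δ)
    (G : α × γ → δ) (hG : ∀ ω, Xd ω = G (A ω, C ω)) :
    cmi μ A B C = cmi μ (fun ω => (Xd ω, A ω)) B C := by
  simp only [cmi, condent]
  have h1 : ent μ (fun ω => (A ω, C ω)) = ent μ (fun ω => ((Xd ω, A ω), C ω)) :=
    ent_eq_of_maps μ _ _ (fun p => ((G p, p.1), p.2)) (fun p => (p.1.2, p.2))
      (fun ω => by simp only [hG ω]) (fun ω => rfl)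
  have h2 : ent μ (fun ω => ((A ω, B ω), C ω))
      = ent μ (fun ω => (((Xd ω, A ω), B ω), C ω)) :=
    ent_eq_of_maps μ _ _ (fun p => (((G (p.1.1, p.2), p.1.1), p.1.2), p.2))
      (fun p => ((p.1.1.2, p.1.2), p.2))
      (fun ω => by simp only [hG ω]) (fun ω => rfl)
  linarith [h1, h2]

lemma mi_split (μ : Ω → ℝ) (A : Ω → α) (B : Ω → β) (C : Ω → γ) :
    mi μ A (fun ω => (B ω, C ω)) = mi μ A B + cmi μ A C B := by
  simp only [mi, cmi, condent]
  have h1 : ent μ (fun ω => (B ω, C ω)) = ent μ (fun ω => (C ω, B ω)) :=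
    ent_eq_of_maps μ _ _ (fun p => (p.2, p.1)) (fun p => (p.2, p.1))
      (fun ω => rfl) (fun ω => rfl)
  have h2 : ent μ (fun ω => (A ω, (B ω, C ω))) = ent μ (fun ω => ((A ω, C ω), B ω)) :=
    ent_eq_of_maps μ _ _ (fun p => ((p.1, p.2.2), p.2.1)) (fun p => (p.1.1, (p.2, p.1.2)))
      (fun ω => rfl) (fun ω => rfl)
  linarith [h1, h2]

lemma keylemma (μ : Ω → ℝ) (A : Ω → α) (Xd : Ω → χ) (Bv : Ω → β) (Cv : Ω → γ)
    (Dy : Ω → δ) (Dz : Ω → δ') (Ys : Ω → ε)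
    (G : α × δ' → χ) (hG : ∀ ω, Xd ω = G (A ω, Dz ω))
    (s : β × δ → ε) (hs : ∀ ω, Ys ω = s (Bv ω, Dy ω))
    (t : ε → β × δ) (ht : ∀ ω, (Bv ω, Dy ω) = t (Ys ω))
    (hfb' : condent μ Cv (fun ω => (Ys ω, Dz ω, A ω))
          = condent μ Cv (fun ω => (Ys ω, Dz ω)))
    (hch' : condent μ Bv (fun ω => (Dy ω, Xd ω, Dz ω, A ω))
          = condent μ Bv (fun ω => (Dy ω, Xd ω, Dz ω))) :
    cmi μ A (fun ω => (Bv ω, Cv ω)) (fun ω => (Dy ω, Dz ω))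
      = cmi μ Xd Bv (fun ω => (Dy ω, Dz ω)) := by
  have h0 : cmi μ A (fun ω => (Bv ω, Cv ω)) (fun ω => (Dy ω, Dz ω))
      = cmi μ A Bv (fun ω => (Dy ω, Dz ω))
        + cmi μ A Cv (fun ω => (Bv ω, (Dy ω, Dz ω))) :=
    cmi_pair_right μ A Bv Cv _
  have hsub : cmi μ A Cv (fun ω => (Bv ω, (Dy ω, Dz ω)))
      = condent μ Cv (fun ω => (Bv ω, (Dy ω, Dz ω)))
        - condent μ Cv (fun ω => (A ω, (Bv ω, (Dy ω, Dz ω)))) :=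
    cmi_eq_condent_sub μ A Cv _
  have e1 : condent μ Cv (fun ω => (Bv ω, (Dy ω, Dz ω)))
      = condent μ Cv (fun ω => (Ys ω, Dz ω)) :=
    condent_congr μ Cv _ _
      (fun p => (s (p.1, p.2.1), p.2.2))
      (fun q => ((t q.1).1, ((t q.1).2, q.2)))
      (fun ω => by simp only [hs ω])
      (fun ω => by
        show (Bv ω, (Dy ω, Dz ω)) = ((t (Ys ω)).1, ((t (Ys ω)).2, Dz ω))
        rw [← ht ω])
  have e2 : condent μ Cv (fun ω => (A ω, (Bv ω, (Dy ω, Dz ω))))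
      = condent μ Cv (fun ω => (Ys ω, Dz ω, A ω)) :=
    condent_congr μ Cv _ _
      (fun p => (s (p.2.1, p.2.2.1), (p.2.2.2, p.1)))
      (fun q => (q.2.2, ((t q.1).1, ((t q.1).2, q.2.1))))
      (fun ω => by simp only [hs ω])
      (fun ω => by
        show (A ω, (Bv ω, (Dy ω, Dz ω)))
          = ((Ys ω, Dz ω, A ω).2.2, ((t (Ys ω)).1, ((t (Ys ω)).2, (Ys ω, Dz ω, A ω).2.1)))
        rw [← ht ω])
  have h2 : cmi μ A Cv (fun ω => (Bv ω, (Dy ω, Dz ω))) = 0 := by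
    linarith [hsub, e1, e2, hfb']
  have h13 : cmi μ A Bv (fun ω => (Dy ω, Dz ω))
      = cmi μ (fun ω => (Xd ω, A ω)) Bv (fun ω => (Dy ω, Dz ω)) :=
    cmi_add_fn' μ A Bv _ Xd (fun p => G (p.1, p.2.2)) (fun ω => by simp only [hG ω])
  have c1 : cmi μ (fun ω => (Xd ω, A ω)) Bv (fun ω => (Dy ω, Dz ω))
      = cmi μ Bv (fun ω => (Xd ω, A ω)) (fun ω => (Dy ω, Dz ω)) :=
    cmi_comm μ _ Bv _
  have c2 : cmi μ Bv (fun ω => (Xd ω, A ω)) (fun ω => (Dy ω, Dz ω))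
      = cmi μ Bv Xd (fun ω => (Dy ω, Dz ω))
        + cmi μ Bv A (fun ω => (Xd ω, (Dy ω, Dz ω))) :=
    cmi_pair_right μ Bv Xd A _
  have c3 : cmi μ Bv Xd (fun ω => (Dy ω, Dz ω)) = cmi μ Xd Bv (fun ω => (Dy ω, Dz ω)) :=
    cmi_comm μ Bv Xd _
  have c4 : cmi μ Bv A (fun ω => (Xd ω, (Dy ω, Dz ω)))
      = cmi μ A Bv (fun ω => (Xd ω, (Dy ω, Dz ω))) :=
    cmi_comm μ Bv A _
  have hsub5 : cmi μ A Bv (fun ω => (Xd ω, (Dy ω, Dz ω)))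
      = condent μ Bv (fun ω => (Xd ω, (Dy ω, Dz ω)))
        - condent μ Bv (fun ω => (A ω, (Xd ω, (Dy ω, Dz ω)))) :=
    cmi_eq_condent_sub μ A Bv _
  have e3 : condent μ Bv (fun ω => (Xd ω, (Dy ω, Dz ω)))
      = condent μ Bv (fun ω => (Dy ω, Xd ω, Dz ω)) :=
    condent_congr μ Bv _ _
      (fun p => (p.2.1, p.1, p.2.2))
      (fun q => (q.2.1, (q.1, q.2.2)))
      (fun ω => rfl) (fun ω => rfl)
  have e4 : condent μ Bv (fun ω => (A ω, (Xd ω, (Dy ω, Dz ω))))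
      = condent μ Bv (fun ω => (Dy ω, Xd ω, Dz ω, A ω)) :=
    condent_congr μ Bv _ _
      (fun p => (p.2.2.1, p.2.1, p.2.2.2, p.1))
      (fun q => (q.2.2.2, (q.2.1, (q.1, q.2.2.1))))
      (fun ω => rfl) (fun ω => rfl)
  have h5 : cmi μ A Bv (fun ω => (Xd ω, (Dy ω, Dz ω))) = 0 := by
    linarith [hsub5, e3, e4, hch']
  linarith [h0, h2, h13, c1, c2, c3, c4, h5]

end AuxInfo

/-- under the code-function setup (no feedback from `(Y,Z)` to
`F`, `Xᵢ` determined by `(Fⁱ, Zⁱ⁻¹)`, feedback Markov chain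
`Fⁱ − (Yⁱ, Zⁱ⁻¹) − Zᵢ`, channel Markov chain `Fⁱ − (Yⁱ⁻¹, Xⁱ, Zⁱ⁻¹) − Yᵢ`),
`I(Fⁿ; Yⁿ) = I(Xⁿ → Yⁿ ‖ Zⁿ) − I(Fⁿ; Zⁿ | Yⁿ)`. -/
theorem stmt16 {Ω : Type*} [Fintype Ω] (μ : Ω → ℝ)
    (hμ0 : ∀ ω, 0 ≤ μ ω) (hμ1 : ∑ ω, μ ω = 1)
    {α β ζ φ : Type*} [Fintype α] [DecidableEq α] [Fintype β] [DecidableEq β]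
    [Fintype ζ] [DecidableEq ζ] [Fintype φ] [DecidableEq φ]
    {n : ℕ} (F : Ω → Fin n → φ) (X : Ω → Fin n → α) (Y : Ω → Fin n → β)
    (Z : Ω → Fin n → ζ)
    (hX : ∀ i : Fin n, ∃ g : (Fin (i.1 + 1) → φ) × (Fin i.1 → ζ) → α,
      ∀ ω, X ω i = g (pfx (F ω) (i.1 + 1) i.isLt, pfx (Z ω) i.1 i.isLt.le))
    (hnofb : mi μ F (fun ω => (Y ω, Z ω))
      = ∑ i : Fin n, cmi μ (fun ω => pfx (F ω) (i.1 + 1) i.isLt)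
          (fun ω => (Y ω i, Z ω i))
          (fun ω => (pfx (Y ω) i.1 i.isLt.le, pfx (Z ω) i.1 i.isLt.le)))
    (hfb : ∀ i : Fin n,
      condent μ (fun ω => Z ω i)
          (fun ω => (pfx (Y ω) (i.1 + 1) i.isLt, pfx (Z ω) i.1 i.isLt.le,
            pfx (F ω) (i.1 + 1) i.isLt))
      = condent μ (fun ω => Z ω i)
          (fun ω => (pfx (Y ω) (i.1 + 1) i.isLt, pfx (Z ω) i.1 i.isLt.le)))
    (hch : ∀ i : Fin n,
      condent μ (fun ω => Y ω i)
          (fun ω => (pfx (Y ω) i.1 i.isLt.le, pfx (X ω) (i.1 + 1) i.isLt,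
            pfx (Z ω) i.1 i.isLt.le, pfx (F ω) (i.1 + 1) i.isLt))
      = condent μ (fun ω => Y ω i)
          (fun ω => (pfx (Y ω) i.1 i.isLt.le, pfx (X ω) (i.1 + 1) i.isLt,
            pfx (Z ω) i.1 i.isLt.le))) :
    mi μ F Y = dirinfoCausal μ X Y Z - cmi μ F Z Y := by
  classical
  choose g hg using hX
  have key : ∀ i : Fin n,
      cmi μ (fun ω => pfx (F ω) (i.1 + 1) i.isLt)
          (fun ω => (Y ω i, Z ω i))
          (fun ω => (pfx (Y ω) i.1 i.isLt.le, pfx (Z ω) i.1 i.isLt.le))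
        = cmi μ (fun ω => pfx (X ω) (i.1 + 1) i.isLt) (fun ω => Y ω i)
          (fun ω => (pfx (Y ω) i.1 i.isLt.le, pfx (Z ω) i.1 i.isLt.le)) := by
    intro i
    have hG : ∀ ω, pfx (X ω) (i.1 + 1) i.isLt
        = (fun p : (Fin (i.1 + 1) → φ) × (Fin i.1 → ζ) =>
            (fun j : Fin (i.1 + 1) =>
              g ⟨j.1, Nat.lt_of_lt_of_le j.isLt i.isLt⟩
                ((fun k => p.1 ⟨k.1, Nat.lt_of_lt_of_le k.isLt j.isLt⟩),
                 (fun k => p.2 ⟨k.1, Nat.lt_of_lt_of_le k.isLt (Nat.lt_succ_iff.mp j.isLt)⟩))))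
          ((fun ω => pfx (F ω) (i.1 + 1) i.isLt) ω, (fun ω => pfx (Z ω) i.1 i.isLt.le) ω) := by
      intro ω
      funext j
      exact hg ⟨j.1, Nat.lt_of_lt_of_le j.isLt i.isLt⟩ ω
    have hs : ∀ ω, pfx (Y ω) (i.1 + 1) i.isLt
        = (fun p : β × (Fin i.1 → β) =>
            (fun j : Fin (i.1 + 1) => if h : j.1 < i.1 then p.2 ⟨j.1, h⟩ else p.1))
          ((fun ω => Y ω i) ω, (fun ω => pfx (Y ω) i.1 i.isLt.le) ω) := by
      intro ω
      funext j
      show Y ω (Fin.castLE i.isLt j) = _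
      by_cases h : j.1 < i.1
      · simp only [dif_pos h]
        rfl
      · simp only [dif_neg h]
        have hj : Fin.castLE i.isLt j = i := by
          apply Fin.ext
          have h1 := j.isLt
          simp only [Fin.coe_castLE]
          omega
        rw [hj]
    have ht : ∀ ω, ((fun ω => Y ω i) ω, (fun ω => pfx (Y ω) i.1 i.isLt.le) ω)
        = (fun y : Fin (i.1 + 1) → β =>
            (y ⟨i.1, Nat.lt_succ_self _⟩, fun k => y ⟨k.1, Nat.lt_succ_of_lt k.isLt⟩))
          (pfx (Y ω) (i.1 + 1) i.isLt) := fun ω => rfl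
    exact keylemma μ (fun ω => pfx (F ω) (i.1 + 1) i.isLt)
      (fun ω => pfx (X ω) (i.1 + 1) i.isLt) (fun ω => Y ω i) (fun ω => Z ω i)
      (fun ω => pfx (Y ω) i.1 i.isLt.le) (fun ω => pfx (Z ω) i.1 i.isLt.le)
      (fun ω => pfx (Y ω) (i.1 + 1) i.isLt)
      (fun p : (Fin (i.1 + 1) → φ) × (Fin i.1 → ζ) =>
        (fun j : Fin (i.1 + 1) =>
          g ⟨j.1, Nat.lt_of_lt_of_le j.isLt i.isLt⟩
            ((fun k => p.1 ⟨k.1, Nat.lt_of_lt_of_le k.isLt j.isLt⟩),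
             (fun k => p.2 ⟨k.1, Nat.lt_of_lt_of_le k.isLt (Nat.lt_succ_iff.mp j.isLt)⟩))))
      hG
      (fun p : β × (Fin i.1 → β) =>
        (fun j : Fin (i.1 + 1) => if h : j.1 < i.1 then p.2 ⟨j.1, h⟩ else p.1))
      hs
      (fun y : Fin (i.1 + 1) → β =>
        (y ⟨i.1, Nat.lt_succ_self _⟩, fun k => y ⟨k.1, Nat.lt_succ_of_lt k.isLt⟩))
      ht
      (hfb i) (hch i)
  have hsum : dirinfoCausal μ X Y Z
      = ∑ i : Fin n, cmi μ (fun ω => pfx (F ω) (i.1 + 1) i.isLt)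
          (fun ω => (Y ω i, Z ω i))
          (fun ω => (pfx (Y ω) i.1 i.isLt.le, pfx (Z ω) i.1 i.isLt.le)) := by
    unfold dirinfoCausal
    exact Finset.sum_congr rfl fun i _ => (key i).symm
  have hsplit : mi μ F (fun ω => (Y ω, Z ω)) = mi μ F Y + cmi μ F Z Y :=
    mi_split μ F Y Z
  linarith [hsplit, hnofb, hsum]

end NFB
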